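/- Let T be a weighted type graph over a commutative semiring S and define the weight of a graph G as w_T(G) = Σ_{t : G → T} w_T(t), the sum over all typing morphisms. If G is the pushout of G₁ and G₂ along a discrete graph G₀ with morphisms ψ₁, ψ₂, then w_T(G) = Σ_{t₀ : G₀ → T} ( Σ_{t₁ : G₁ → T, t₁∘ψ₁ = t₀} w_T(t₁) ) ⊗ ( Σ_{t₂ : G₂ → T, t₂∘ψ₂ = t₀} w_T(t₂) ). -/

import Mathlib

/-
By the universal property, typings `t : G → T` correspond bijectively to pairs `(t₁, t₂)` of
typings of `G₁` and `G₂` that agree on `G₀`. Since `G₀` has no edges, the graph with the vertices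
of `G` and edge set `G₁.E ⊕ G₂.E` is a cocone under the span, and comparing it with `G` shows that
the edges of `G` are the disjoint union of those of `G₁` and `G₂`; hence `w(t) = w(t₁) ⊗ w(t₂)`.
Grouping the compatible pairs by their common restriction `t₀` to `G₀` and distributing gives
the formula.
-/

structure LabeledGraph (Λ : Type) where
  V : Type
  E : Type
  src : E → V
  tgt : E → V
  lab : E → Λ

@[ext]
structure GraphHom {Λ : Type} (G H : LabeledGraph Λ) where
  fV : G.V → H.V
  fE : G.E → H.E
  src_eq : ∀ e, H.src (fE e) = fV (G.src e)
  tgt_eq : ∀ e, H.tgt (fE e) = fV (G.tgt e)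
  lab_eq : ∀ e, H.lab (fE e) = G.lab e

def GraphHom.comp {Λ : Type} {G H K : LabeledGraph Λ} (g : GraphHom H K) (f : GraphHom G H) :
    GraphHom G K where
  fV := g.fV ∘ f.fV
  fE := g.fE ∘ f.fE
  src_eq e := by simp [g.src_eq, f.src_eq]
  tgt_eq e := by simp [g.tgt_eq, f.tgt_eq]
  lab_eq e := by simp [g.lab_eq, f.lab_eq]

/-- The pushout property via the universal property in the category of graphs. -/
def IsGraphPushout {Λ : Type} {G₀ G₁ G₂ G : LabeledGraph Λ}
    (ψ₁ : GraphHom G₀ G₁) (ψ₂ : GraphHom G₀ G₂)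
    (φ₁ : GraphHom G₁ G) (φ₂ : GraphHom G₂ G) : Prop :=
  φ₁.comp ψ₁ = φ₂.comp ψ₂ ∧
    ∀ (T : LabeledGraph Λ) (t₁ : GraphHom G₁ T) (t₂ : GraphHom G₂ T),
      t₁.comp ψ₁ = t₂.comp ψ₂ →
        ∃! t : GraphHom G T, t.comp φ₁ = t₁ ∧ t.comp φ₂ = t₂


/-- The weight of a typing morphism: product of the weights of the images of all edges. -/
def weight {Λ : Type} {S : Type*} [CommSemiring S] {D T : LabeledGraph Λ} [Fintype D.E]
    (w : T.E → S) (t : GraphHom D T) : S :=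
  ∏ e : D.E, w (t.fE e)

namespace GraphHom

variable {Λ : Type}

def id (G : LabeledGraph Λ) : GraphHom G G :=
  ⟨_root_.id, _root_.id, fun _ => rfl, fun _ => rfl, fun _ => rfl⟩

theorem comp_assoc {G H K L : LabeledGraph Λ} (h : GraphHom K L) (g : GraphHom H K)
    (f : GraphHom G H) : (h.comp g).comp f = h.comp (g.comp f) := rfl

end GraphHom

section EdgeSum

variable {Λ : Type} {G₁ G₂ G : LabeledGraph Λ} (φ₁ : GraphHom G₁ G) (φ₂ : GraphHom G₂ G)

def LabeledGraph.edgeSum : LabeledGraph Λ where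
  V := G.V
  E := G₁.E ⊕ G₂.E
  src := Sum.elim (φ₁.fV ∘ G₁.src) (φ₂.fV ∘ G₂.src)
  tgt := Sum.elim (φ₁.fV ∘ G₁.tgt) (φ₂.fV ∘ G₂.tgt)
  lab := Sum.elim G₁.lab G₂.lab

def LabeledGraph.edgeSum.inl : GraphHom G₁ (LabeledGraph.edgeSum φ₁ φ₂) :=
  ⟨φ₁.fV, Sum.inl, fun _ => rfl, fun _ => rfl, fun _ => rfl⟩

def LabeledGraph.edgeSum.inr : GraphHom G₂ (LabeledGraph.edgeSum φ₁ φ₂) :=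
  ⟨φ₂.fV, Sum.inr, fun _ => rfl, fun _ => rfl, fun _ => rfl⟩

def LabeledGraph.edgeSum.desc : GraphHom (LabeledGraph.edgeSum φ₁ φ₂) G where
  fV := _root_.id
  fE := Sum.elim φ₁.fE φ₂.fE
  src_eq := Sum.rec φ₁.src_eq φ₂.src_eq
  tgt_eq := Sum.rec φ₁.tgt_eq φ₂.tgt_eq
  lab_eq := Sum.rec φ₁.lab_eq φ₂.lab_eq

end EdgeSum

namespace IsGraphPushout

variable {Λ : Type} {G₀ G₁ G₂ G : LabeledGraph Λ}
  {ψ₁ : GraphHom G₀ G₁} {ψ₂ : GraphHom G₀ G₂} {φ₁ : GraphHom G₁ G} {φ₂ : GraphHom G₂ G}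

theorem comp_comp_eq (hpo : IsGraphPushout ψ₁ ψ₂ φ₁ φ₂) {T : LabeledGraph Λ}
    (t : GraphHom G T) : (t.comp φ₁).comp ψ₁ = (t.comp φ₂).comp ψ₂ :=
  congrArg t.comp hpo.1

theorem hom_ext (hpo : IsGraphPushout ψ₁ ψ₂ φ₁ φ₂) {T : LabeledGraph Λ} {t t' : GraphHom G T}
    (h₁ : t.comp φ₁ = t'.comp φ₁) (h₂ : t.comp φ₂ = t'.comp φ₂) : t = t' := by
  obtain ⟨_, -, huniq⟩ := hpo.2 T (t.comp φ₁) (t.comp φ₂) (hpo.comp_comp_eq t)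
  exact (huniq t ⟨rfl, rfl⟩).trans (huniq t' ⟨h₁.symm, h₂.symm⟩).symm

noncomputable def homEquiv (hpo : IsGraphPushout ψ₁ ψ₂ φ₁ φ₂) (T : LabeledGraph Λ) :
    GraphHom G T ≃ {p : GraphHom G₁ T × GraphHom G₂ T // p.1.comp ψ₁ = p.2.comp ψ₂} where
  toFun t := ⟨(t.comp φ₁, t.comp φ₂), hpo.comp_comp_eq t⟩
  invFun p := (hpo.2 T p.1.1 p.1.2 p.2).exists.choose
  left_inv t := by
    have hspec := (hpo.2 T (t.comp φ₁) (t.comp φ₂) (hpo.comp_comp_eq t)).exists.choose_spec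
    exact hpo.hom_ext hspec.1 hspec.2
  right_inv p := by
    have hspec := (hpo.2 T p.1.1 p.1.2 p.2).exists.choose_spec
    exact Subtype.ext (Prod.ext hspec.1 hspec.2)

open LabeledGraph in
theorem bijective_sumElim_fE (hdiscrete : IsEmpty G₀.E) (hpo : IsGraphPushout ψ₁ ψ₂ φ₁ φ₂) :
    Function.Bijective (Sum.elim φ₁.fE φ₂.fE) := by
  have hV : φ₁.fV ∘ ψ₁.fV = φ₂.fV ∘ ψ₂.fV := congrArg GraphHom.fV hpo.1
  -- The one place where discreteness enters: an edge of `G₀` would land in both summands.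
  have hcocone : (edgeSum.inl φ₁ φ₂).comp ψ₁ = (edgeSum.inr φ₁ φ₂).comp ψ₂ :=
    GraphHom.ext hV (funext hdiscrete.elim)
  obtain ⟨t, ⟨ht₁, ht₂⟩, -⟩ := hpo.2 _ _ _ hcocone
  have hdesc : (edgeSum.desc φ₁ φ₂).comp t = GraphHom.id G :=
    hpo.hom_ext (by rw [GraphHom.comp_assoc, ht₁]; rfl) (by rw [GraphHom.comp_assoc, ht₂]; rfl)
  refine Function.bijective_iff_has_inverse.2 ⟨t.fE, ?_, congrFun (congrArg GraphHom.fE hdesc)⟩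
  rintro (e | e)
  · exact congrFun (congrArg GraphHom.fE ht₁) e
  · exact congrFun (congrArg GraphHom.fE ht₂) e

theorem weight_eq_mul {S : Type*} [CommSemiring S] {T : LabeledGraph Λ}
    [Fintype G.E] [Fintype G₁.E] [Fintype G₂.E]
    (hdiscrete : IsEmpty G₀.E) (hpo : IsGraphPushout ψ₁ ψ₂ φ₁ φ₂)
    (w : T.E → S) (t : GraphHom G T) :
    weight w t = weight w (t.comp φ₁) * weight w (t.comp φ₂) := by
  rw [weight, ← (hpo.bijective_sumElim_fE hdiscrete).prod_comp, Fintype.prod_sum_type]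
  rfl

end IsGraphPushout

theorem Finset.sum_mul_sum_fiberwise_eq_sum_subtype {α β γ R : Type*}
    [Fintype α] [Fintype β] [Fintype γ] [DecidableEq γ] [NonUnitalNonAssocSemiring R]
    (f : α → γ) (g : β → γ) (a : α → R) (b : β → R) :
    ∑ c, (∑ x with f x = c, a x) * (∑ y with g y = c, b y) =
      ∑ p : {p : α × β // f p.1 = g p.2}, a p.1.1 * b p.1.2 := by
  refine Eq.trans ?_
    (Finset.sum_subtype _ (fun _ => Finset.mem_filter_univ _) fun p : α × β => a p.1 * b p.2)
  rw [← Finset.sum_fiberwise _ fun p : α × β => f p.1]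
  refine Finset.sum_congr rfl fun c _ => ?_
  rw [Finset.sum_mul_sum, ← Finset.sum_product']
  refine Finset.sum_congr ?_ fun _ _ => rfl
  ext p
  simp only [Finset.mem_product, Finset.mem_filter, Finset.mem_univ, true_and]
  exact ⟨fun ⟨h₁, h₂⟩ => ⟨h₁.trans h₂.symm, h₁⟩, fun ⟨h₁, h₂⟩ => ⟨h₂, h₁ ▸ h₂⟩⟩

theorem stmt_14 {Λ : Type} {S : Type*} [CommSemiring S]
    {G₀ G₁ G₂ G T : LabeledGraph Λ}
    [Fintype G.E] [Fintype G₁.E] [Fintype G₂.E]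
    [Fintype (GraphHom G T)] [Fintype (GraphHom G₁ T)] [Fintype (GraphHom G₂ T)]
    [Fintype (GraphHom G₀ T)] [DecidableEq (GraphHom G₀ T)]
    (hdiscrete : IsEmpty G₀.E)
    (ψ₁ : GraphHom G₀ G₁) (ψ₂ : GraphHom G₀ G₂)
    (φ₁ : GraphHom G₁ G) (φ₂ : GraphHom G₂ G)
    (hpo : IsGraphPushout ψ₁ ψ₂ φ₁ φ₂)
    (w : T.E → S) :
    ∑ t : GraphHom G T, weight w t =
      ∑ t₀ : GraphHom G₀ T,
        (∑ t₁ ∈ Finset.univ.filter (fun t₁ : GraphHom G₁ T => t₁.comp ψ₁ = t₀),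
            weight w t₁) *
          ∑ t₂ ∈ Finset.univ.filter (fun t₂ : GraphHom G₂ T => t₂.comp ψ₂ = t₀),
            weight w t₂ := by
  rw [Finset.sum_mul_sum_fiberwise_eq_sum_subtype, ← (hpo.homEquiv T).sum_comp]
  exact Finset.sum_congr rfl fun t _ => hpo.weight_eq_mul hdiscrete w t
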